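/- Key algebraic cancellation: if P satisfies (LP)' = ΛQ with lim_{y→-∞} P(y) = (1/2)∫Q, lim_{y→+∞} P(y) = 0, and Y₀ satisfies L Y₀ = 5Q⁴ (both with suitable decay of derivatives), then -(Y₀, ΛQ) + 20((Q³Y₀P)', Q) + 20((PQ³)', Q) = 0. -/

import Mathlib

open MeasureTheory

/-- derivative congruence helper -/
lemma hasDerivAt_congr_deriv {f : ℝ → ℝ} {a b x : ℝ} (h : HasDerivAt f a x) (e : a = b) :
    HasDerivAt f b x := e ▸ h

lemma abs_mul_le' {a b Ca Cb : ℝ} (ha : |a| ≤ Ca) (hb : |b| ≤ Cb) : |a * b| ≤ Ca * Cb := by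
  rw [abs_mul]
  exact mul_le_mul ha hb (abs_nonneg _) ((abs_nonneg a).trans ha)

lemma mul_bound_exp {a b Ca Cb e : ℝ} (ha : |a| ≤ Ca * e) (hb : |b| ≤ Cb) :
    |a * b| ≤ Ca * Cb * e := by
  rw [abs_mul]
  have h := mul_le_mul ha hb (abs_nonneg _) ((abs_nonneg a).trans ha)
  calc |a| * |b| ≤ Ca * e * Cb := h
    _ = Ca * Cb * e := by ring

lemma mul_bound_exp' {a b Ca Cb e : ℝ} (hb : |b| ≤ Cb) (ha : |a| ≤ Ca * e) :
    |b * a| ≤ Cb * Ca * e := by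
  rw [mul_comm b a]
  exact (mul_bound_exp ha hb).trans_eq (by ring)

lemma aux_poly (r : ℕ) (t : ℝ) (ht : 0 ≤ t) :
    (1 + t) ^ r * Real.exp (-t) ≤ (2 * (r : ℝ) + 2) ^ r := by
  have hpos : (0:ℝ) < 2 * (r : ℝ) + 2 := by positivity
  have h1 : 1 + t ≤ (2 * (r : ℝ) + 2) * Real.exp (t / (2 * (r : ℝ) + 2)) := by
    have h2 := Real.add_one_le_exp (t / (2 * (r : ℝ) + 2))
    have h3 : (2 * (r : ℝ) + 2) * (t / (2 * (r : ℝ) + 2) + 1)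
        ≤ (2 * (r : ℝ) + 2) * Real.exp (t / (2 * (r : ℝ) + 2)) :=
      mul_le_mul_of_nonneg_left h2 hpos.le
    have h4 : (2 * (r : ℝ) + 2) * (t / (2 * (r : ℝ) + 2) + 1) = t + (2 * (r : ℝ) + 2) := by
      field_simp
    linarith
  have h5 : (1 + t) ^ r ≤ ((2 * (r : ℝ) + 2) * Real.exp (t / (2 * (r : ℝ) + 2))) ^ r :=
    pow_le_pow_left₀ (by linarith) h1 r
  rw [mul_pow, ← Real.exp_nat_mul] at h5
  have h6 : (1 + t) ^ r * Real.exp (-t)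
      ≤ (2 * (r : ℝ) + 2) ^ r * Real.exp ((r : ℝ) * (t / (2 * (r : ℝ) + 2))) * Real.exp (-t) :=
    mul_le_mul_of_nonneg_right h5 (Real.exp_pos _).le
  rw [mul_assoc, ← Real.exp_add] at h6
  have h8 : (r : ℝ) * t ≤ t * (2 * (r : ℝ) + 2) := by
    nlinarith [Nat.cast_nonneg (α := ℝ) r]
  have h7 : (r : ℝ) * (t / (2 * (r : ℝ) + 2)) + -t ≤ 0 := by
    rw [mul_div_assoc']
    have h9 : (r : ℝ) * t / (2 * (r : ℝ) + 2) ≤ t := (div_le_iff₀ hpos).mpr h8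
    linarith
  calc (1 + t) ^ r * Real.exp (-t)
      ≤ (2 * (r : ℝ) + 2) ^ r * Real.exp ((r : ℝ) * (t / (2 * (r : ℝ) + 2)) + -t) := h6
    _ ≤ (2 * (r : ℝ) + 2) ^ r * 1 :=
      mul_le_mul_of_nonneg_left (Real.exp_le_one_iff.mpr h7) (by positivity)
    _ = (2 * (r : ℝ) + 2) ^ r := mul_one _

lemma integrable_exp_neg_abs' : Integrable (fun x : ℝ => Real.exp (-|x|)) := by
  have h1 : IntegrableOn (fun x : ℝ => Real.exp (-|x|)) (Set.Ioi 0) := by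
    refine (exp_neg_integrableOn_Ioi 0 one_pos).congr_fun ?_ measurableSet_Ioi
    intro x hx
    simp [abs_of_pos (Set.mem_Ioi.mp hx)]
  have h2 : IntegrableOn (fun x : ℝ => Real.exp (-|x|)) (Set.Iic 0) := by
    refine (integrableOn_exp_Iic 0).congr_fun ?_ measurableSet_Iic
    intro x hx
    simp [abs_of_nonpos (Set.mem_Iic.mp hx)]
  have h3 := h2.union h1
  rw [Set.Iic_union_Ioi] at h3
  exact integrableOn_univ.mp h3

lemma abs_mul_exp_neg_abs_le (y : ℝ) : |y| * Real.exp (-|y|) ≤ 1 := by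
  rw [Real.exp_neg, ← div_eq_mul_inv]
  rw [div_le_one (Real.exp_pos _)]
  have := Real.add_one_le_exp |y|
  linarith

theorem key_cancellation (Q P Y₀ : ℝ → ℝ)
    (hQ : ContDiff ℝ (⊤ : ℕ∞) Q)
    (hODE : ∀ x : ℝ, deriv (deriv Q) x + Q x ^ 5 = Q x)
    (hQdecay : ∀ k : ℕ, ∃ C > 0, ∀ y : ℝ,
      |iteratedDeriv k Q y| ≤ C * Real.exp (-|y|))
    (hP : ContDiff ℝ (⊤ : ℕ∞) P)
    (hP'decay : ∀ k : ℕ, ∃ C > 0, ∃ r > 0, ∀ y : ℝ,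
      |iteratedDeriv k (deriv P) y| ≤ C * (1 + |y|) ^ r * Real.exp (-|y|))
    (hPeq : ∀ y : ℝ,
      deriv (fun z => -deriv (deriv P) z + P z - 5 * Q z ^ 4 * P z) y
        = Q y / 2 + y * deriv Q y)
    (hPbot : Filter.Tendsto P Filter.atBot (nhds ((1 / 2) * ∫ y : ℝ, Q y)))
    (hPtop : Filter.Tendsto P Filter.atTop (nhds 0))
    (hY : ContDiff ℝ (⊤ : ℕ∞) Y₀)
    (hYdecay : ∀ k : ℕ, ∃ C > 0, ∀ y : ℝ,
      |iteratedDeriv k Y₀ y| ≤ C * Real.exp (-|y|))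
    (hLY : ∀ y : ℝ, -deriv (deriv Y₀) y + Y₀ y - 5 * Q y ^ 4 * Y₀ y = 5 * Q y ^ 4) :
    -(∫ y : ℝ, Y₀ y * (Q y / 2 + y * deriv Q y))
      + 20 * (∫ y : ℝ, deriv (fun z => Q z ^ 3 * Y₀ z * P z) y * Q y)
      + 20 * (∫ y : ℝ, deriv (fun z => P z * Q z ^ 3) y * Q y) = 0 := by
  -- differentiability infrastructure
  have hQi : ContDiff ℝ (↑(⊤:ℕ∞)) Q := hQ.of_le (by simp)
  have hPi : ContDiff ℝ (↑(⊤:ℕ∞)) P := hP.of_le (by simp)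
  have hYi : ContDiff ℝ (↑(⊤:ℕ∞)) Y₀ := hY.of_le (by simp)
  obtain ⟨hQd, hQ'⟩ := contDiff_infty_iff_deriv.mp hQi
  obtain ⟨hPd, hP'⟩ := contDiff_infty_iff_deriv.mp hPi
  obtain ⟨hP'd, hP''⟩ := contDiff_infty_iff_deriv.mp hP'
  obtain ⟨hP''d, hP'''⟩ := contDiff_infty_iff_deriv.mp hP''
  obtain ⟨hYd, hY'⟩ := contDiff_infty_iff_deriv.mp hYi
  obtain ⟨hY'd, hY''⟩ := contDiff_infty_iff_deriv.mp hY'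
  have hQ1 : ∀ x, HasDerivAt Q (deriv Q x) x := fun x => (hQd x).hasDerivAt
  have hP1 : ∀ x, HasDerivAt P (deriv P x) x := fun x => (hPd x).hasDerivAt
  have hP2 : ∀ x, HasDerivAt (deriv P) (deriv (deriv P) x) x := fun x => (hP'd x).hasDerivAt
  have hP3 : ∀ x, HasDerivAt (deriv (deriv P)) (deriv (deriv (deriv P)) x) x :=
    fun x => (hP''d x).hasDerivAt
  have hY1 : ∀ x, HasDerivAt Y₀ (deriv Y₀ x) x := fun x => (hYd x).hasDerivAt
  have hY2 : ∀ x, HasDerivAt (deriv Y₀) (deriv (deriv Y₀) x) x := fun x => (hY'd x).hasDerivAt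
  -- explicit derivatives of the three product functions
  have hd3 : ∀ x, HasDerivAt (fun z => Q z ^ 3 * Y₀ z * P z)
      (3 * Q x ^ 2 * deriv Q x * Y₀ x * P x + Q x ^ 3 * deriv Y₀ x * P x
        + Q x ^ 3 * Y₀ x * deriv P x) x := by
    intro x
    apply hasDerivAt_congr_deriv ((((hQ1 x).pow 3).mul (hY1 x)).mul (hP1 x))
    push_cast
    simp only [Pi.pow_apply, Pi.mul_apply]
    ring
  have hdC : ∀ x, HasDerivAt (fun z => P z * Q z ^ 3)
      (deriv P x * Q x ^ 3 + 3 * P x * Q x ^ 2 * deriv Q x) x := by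
    intro x
    apply hasDerivAt_congr_deriv ((hP1 x).mul ((hQ1 x).pow 3))
    push_cast
    simp only [Pi.pow_apply, Pi.mul_apply]
    ring
  have hF : ∀ x, HasDerivAt (fun z => -deriv (deriv P) z + P z - 5 * Q z ^ 4 * P z)
      (-deriv (deriv (deriv P)) x + deriv P x - 20 * Q x ^ 3 * deriv Q x * P x
        - 5 * Q x ^ 4 * deriv P x) x := by
    intro x
    apply hasDerivAt_congr_deriv
      (((hP3 x).neg.add (hP1 x)).sub ((((hQ1 x).pow 4).const_mul 5).mul (hP1 x)))
    push_cast
    simp only [Pi.pow_apply, Pi.mul_apply]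
    ring
  -- the antiderivative W of the full integrand
  have hW : ∀ x, HasDerivAt
      (fun y => Y₀ y * deriv (deriv P) y - deriv Y₀ y * deriv P y
        + 20 * Q y ^ 4 * (Y₀ y * P y) + 15 * (Q y ^ 4 * P y))
      (-(Y₀ x * (Q x / 2 + x * deriv Q x))
        + 20 * (deriv (fun z => Q z ^ 3 * Y₀ z * P z) x * Q x)
        + 20 * (deriv (fun z => P z * Q z ^ 3) x * Q x)) x := by
    intro x
    rw [(hd3 x).deriv, (hdC x).deriv, ← hPeq x, (hF x).deriv]
    have hYeq : deriv (deriv Y₀) x = Y₀ x - 5 * Q x ^ 4 * Y₀ x - 5 * Q x ^ 4 := by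
      have := hLY x; linarith
    apply hasDerivAt_congr_deriv
      (((((hY1 x).mul (hP3 x)).sub ((hY2 x).mul (hP2 x))).add
        ((((hQ1 x).pow 4).const_mul 20).mul ((hY1 x).mul (hP1 x)))).add
        ((((hQ1 x).pow 4).mul (hP1 x)).const_mul 15))
    rw [hYeq]
    push_cast
    simp only [Pi.pow_apply, Pi.mul_apply]
    ring
  -- decay constants
  obtain ⟨CQ, hCQ, hQb⟩ := hQdecay 0
  obtain ⟨CQ', hCQ', hQ'b⟩ := hQdecay 1
  obtain ⟨CY, hCY, hYb⟩ := hYdecay 0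
  obtain ⟨CY', hCY', hY'b⟩ := hYdecay 1
  simp only [iteratedDeriv_zero] at hQb hYb
  simp only [iteratedDeriv_one] at hQ'b hY'b
  obtain ⟨C0, hC0, r0, hr0, hb0⟩ := hP'decay 0
  obtain ⟨C1, hC1, r1, hr1, hb1⟩ := hP'decay 1
  simp only [iteratedDeriv_zero] at hb0
  simp only [iteratedDeriv_one] at hb1
  set E : ℝ → ℝ := fun y => Real.exp (-|y|) with hE
  have hE0 : ∀ y, 0 < E y := fun y => Real.exp_pos _
  have hE1 : ∀ y, E y ≤ 1 := fun y => Real.exp_le_one_iff.mpr (neg_nonpos.mpr (abs_nonneg y))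
  -- constant bounds
  have hQc : ∀ y, |Q y| ≤ CQ := fun y =>
    (hQb y).trans (mul_le_of_le_one_right hCQ.le (hE1 y))
  have hQ'c : ∀ y, |deriv Q y| ≤ CQ' := fun y =>
    (hQ'b y).trans (mul_le_of_le_one_right hCQ'.le (hE1 y))
  have hYc : ∀ y, |Y₀ y| ≤ CY := fun y =>
    (hYb y).trans (mul_le_of_le_one_right hCY.le (hE1 y))
  have hY'c : ∀ y, |deriv Y₀ y| ≤ CY' := fun y =>
    (hY'b y).trans (mul_le_of_le_one_right hCY'.le (hE1 y))
  set DP : ℝ := C0 * (2 * (r0 : ℝ) + 2) ^ r0 with hDPdef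
  set DP2 : ℝ := C1 * (2 * (r1 : ℝ) + 2) ^ r1 with hDP2def
  have hP'c : ∀ y, |deriv P y| ≤ DP := by
    intro y
    calc |deriv P y| ≤ C0 * (1 + |y|) ^ r0 * Real.exp (-|y|) := hb0 y
      _ = C0 * ((1 + |y|) ^ r0 * Real.exp (-|y|)) := by ring
      _ ≤ C0 * (2 * (r0 : ℝ) + 2) ^ r0 :=
        mul_le_mul_of_nonneg_left (aux_poly r0 |y| (abs_nonneg y)) hC0.le
  have hP''c : ∀ y, |deriv (deriv P) y| ≤ DP2 := by
    intro y
    calc |deriv (deriv P) y| ≤ C1 * (1 + |y|) ^ r1 * Real.exp (-|y|) := hb1 y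
      _ = C1 * ((1 + |y|) ^ r1 * Real.exp (-|y|)) := by ring
      _ ≤ C1 * (2 * (r1 : ℝ) + 2) ^ r1 :=
        mul_le_mul_of_nonneg_left (aux_poly r1 |y| (abs_nonneg y)) hC1.le
  -- boundedness of P
  obtain ⟨Cp, hCp0, hPc⟩ : ∃ Cp, 0 ≤ Cp ∧ ∀ y, |P y| ≤ Cp := by
    have h1 : ∀ᶠ y in Filter.atTop, |P y| < 1 := by
      have := hPtop
      rw [Metric.tendsto_nhds] at this
      simpa [Real.dist_eq] using this 1 one_pos
    obtain ⟨a, ha⟩ := Filter.eventually_atTop.mp h1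
    have h2 : ∀ᶠ y in Filter.atBot, |P y - (1 / 2) * ∫ y : ℝ, Q y| < 1 := by
      have := hPbot
      rw [Metric.tendsto_nhds] at this
      simpa [Real.dist_eq] using this 1 one_pos
    obtain ⟨b, hb⟩ := Filter.eventually_atBot.mp h2
    obtain ⟨M, hM⟩ := (isCompact_Icc (a := b) (b := a)).exists_bound_of_continuousOn
      hP.continuous.continuousOn
    set L : ℝ := (1 / 2) * ∫ y : ℝ, Q y with hLdef
    refine ⟨1 + |L| + max M 0 + 1, by positivity, fun y => ?_⟩
    rcases le_or_gt a y with hy | hy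
    · have := ha y hy
      have h0 : (0:ℝ) ≤ max M 0 := le_max_right _ _
      have h0' : (0:ℝ) ≤ |L| := abs_nonneg _
      linarith
    · rcases le_or_gt y b with hy2 | hy2
      · have := hb y hy2
        have : |P y| ≤ |P y - L| + |L| := by
          calc |P y| = |(P y - L) + L| := by ring_nf
            _ ≤ |P y - L| + |L| := abs_add_le _ _
        have h0 : (0:ℝ) ≤ max M 0 := le_max_right _ _
        have := hb y hy2
        linarith
      · have hmem : y ∈ Set.Icc b a := ⟨hy2.le, hy.le⟩
        have := hM y hmem
        rw [Real.norm_eq_abs] at this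
        have h1 : M ≤ max M 0 := le_max_left _ _
        have h0' : (0:ℝ) ≤ |L| := abs_nonneg _
        linarith
  -- exponential bounds on the integrands
  have hyQ' : ∀ y, |y * deriv Q y| ≤ CQ' := by
    intro y
    rw [abs_mul]
    calc |y| * |deriv Q y| ≤ |y| * (CQ' * E y) :=
        mul_le_mul_of_nonneg_left (hQ'b y) (abs_nonneg y)
      _ = CQ' * (|y| * E y) := by ring
      _ ≤ CQ' * 1 := mul_le_mul_of_nonneg_left (abs_mul_exp_neg_abs_le y) hCQ'.le
      _ = CQ' := mul_one _
  have bA : ∀ y, |Y₀ y * (Q y / 2 + y * deriv Q y)| ≤ CY * (CQ / 2 + CQ') * E y := by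
    intro y
    refine mul_bound_exp (hYb y) ?_
    refine (abs_add_le _ _).trans (add_le_add ?_ (hyQ' y))
    rw [abs_div]
    have : |(2:ℝ)| = 2 := by norm_num
    rw [this]
    linarith [hQc y]
  have hQ2c : ∀ y, |Q y ^ 2| ≤ CQ ^ 2 := by
    intro y; rw [abs_pow]; exact pow_le_pow_left₀ (abs_nonneg _) (hQc y) 2
  have hQ3c : ∀ y, |Q y ^ 3| ≤ CQ ^ 3 := by
    intro y; rw [abs_pow]; exact pow_le_pow_left₀ (abs_nonneg _) (hQc y) 3
  have hQ4c : ∀ y, |Q y ^ 4| ≤ CQ ^ 4 := by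
    intro y; rw [abs_pow]; exact pow_le_pow_left₀ (abs_nonneg _) (hQc y) 4
  have h3abs : |(3:ℝ)| ≤ 3 := by norm_num
  set M3 : ℝ := 3 * CQ ^ 2 * CQ' * CY * Cp + CQ ^ 3 * CY' * Cp + CQ ^ 3 * CY * DP with hM3def
  have hDB : ∀ y, |deriv (fun z => Q z ^ 3 * Y₀ z * P z) y| ≤ M3 := by
    intro y
    rw [(hd3 y).deriv]
    have m1 : |3 * Q y ^ 2 * deriv Q y * Y₀ y * P y| ≤ 3 * CQ ^ 2 * CQ' * CY * Cp :=
      abs_mul_le' (abs_mul_le' (abs_mul_le' (abs_mul_le' h3abs (hQ2c y)) (hQ'c y)) (hYc y)) (hPc y)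
    have m2 : |Q y ^ 3 * deriv Y₀ y * P y| ≤ CQ ^ 3 * CY' * Cp :=
      abs_mul_le' (abs_mul_le' (hQ3c y) (hY'c y)) (hPc y)
    have m3 : |Q y ^ 3 * Y₀ y * deriv P y| ≤ CQ ^ 3 * CY * DP :=
      abs_mul_le' (abs_mul_le' (hQ3c y) (hYc y)) (hP'c y)
    calc |3 * Q y ^ 2 * deriv Q y * Y₀ y * P y + Q y ^ 3 * deriv Y₀ y * P y
          + Q y ^ 3 * Y₀ y * deriv P y|
        ≤ |3 * Q y ^ 2 * deriv Q y * Y₀ y * P y + Q y ^ 3 * deriv Y₀ y * P y|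
          + |Q y ^ 3 * Y₀ y * deriv P y| := abs_add_le _ _
      _ ≤ (|3 * Q y ^ 2 * deriv Q y * Y₀ y * P y| + |Q y ^ 3 * deriv Y₀ y * P y|)
          + |Q y ^ 3 * Y₀ y * deriv P y| := by
            have h := abs_add_le (3 * Q y ^ 2 * deriv Q y * Y₀ y * P y) (Q y ^ 3 * deriv Y₀ y * P y)
            linarith
      _ ≤ M3 := by rw [hM3def]; linarith
  set MC : ℝ := DP * CQ ^ 3 + 3 * Cp * CQ ^ 2 * CQ' with hMCdef
  have hDC : ∀ y, |deriv (fun z => P z * Q z ^ 3) y| ≤ MC := by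
    intro y
    rw [(hdC y).deriv]
    have n1 : |deriv P y * Q y ^ 3| ≤ DP * CQ ^ 3 := abs_mul_le' (hP'c y) (hQ3c y)
    have n2 : |3 * P y * Q y ^ 2 * deriv Q y| ≤ 3 * Cp * CQ ^ 2 * CQ' :=
      abs_mul_le' (abs_mul_le' (abs_mul_le' h3abs (hPc y)) (hQ2c y)) (hQ'c y)
    calc |deriv P y * Q y ^ 3 + 3 * P y * Q y ^ 2 * deriv Q y|
        ≤ |deriv P y * Q y ^ 3| + |3 * P y * Q y ^ 2 * deriv Q y| := abs_add_le _ _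
      _ ≤ MC := by rw [hMCdef]; linarith
  have bB : ∀ y, |deriv (fun z => Q z ^ 3 * Y₀ z * P z) y * Q y| ≤ M3 * CQ * E y :=
    fun y => mul_bound_exp' (hDB y) (hQb y)
  have bC : ∀ y, |deriv (fun z => P z * Q z ^ 3) y * Q y| ≤ MC * CQ * E y :=
    fun y => mul_bound_exp' (hDC y) (hQb y)
  -- continuity of the integrands
  have contA : Continuous (fun y => Y₀ y * (Q y / 2 + y * deriv Q y)) :=
    hY.continuous.mul ((hQ.continuous.div_const 2).add (continuous_id.mul hQ'.continuous))
  have hG3 : ContDiff ℝ (↑(⊤:ℕ∞)) (fun z => Q z ^ 3 * Y₀ z * P z) := ((hQi.pow 3).mul hYi).mul hPi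
  have hGC : ContDiff ℝ (↑(⊤:ℕ∞)) (fun z => P z * Q z ^ 3) := hPi.mul (hQi.pow 3)
  have contB : Continuous (fun y => deriv (fun z => Q z ^ 3 * Y₀ z * P z) y * Q y) :=
    ((contDiff_infty_iff_deriv.mp hG3).2.continuous).mul hQ.continuous
  have contC : Continuous (fun y => deriv (fun z => P z * Q z ^ 3) y * Q y) :=
    ((contDiff_infty_iff_deriv.mp hGC).2.continuous).mul hQ.continuous
  -- integrability
  have intE : Integrable E := integrable_exp_neg_abs'
  have intA : Integrable (fun y => Y₀ y * (Q y / 2 + y * deriv Q y)) := by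
    refine (intE.const_mul (CY * (CQ / 2 + CQ'))).mono' contA.aestronglyMeasurable ?_
    exact Filter.Eventually.of_forall fun y => by rw [Real.norm_eq_abs]; exact bA y
  have intB : Integrable (fun y => deriv (fun z => Q z ^ 3 * Y₀ z * P z) y * Q y) := by
    refine (intE.const_mul (M3 * CQ)).mono' contB.aestronglyMeasurable ?_
    exact Filter.Eventually.of_forall fun y => by rw [Real.norm_eq_abs]; exact bB y
  have intC : Integrable (fun y => deriv (fun z => P z * Q z ^ 3) y * Q y) := by
    refine (intE.const_mul (MC * CQ)).mono' contC.aestronglyMeasurable ?_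
    exact Filter.Eventually.of_forall fun y => by rw [Real.norm_eq_abs]; exact bC y
  have i1 : Integrable (fun y => -(Y₀ y * (Q y / 2 + y * deriv Q y))) := intA.neg
  have i2 : Integrable (fun y => 20 * (deriv (fun z => Q z ^ 3 * Y₀ z * P z) y * Q y)) :=
    intB.const_mul 20
  have i3 : Integrable (fun y => 20 * (deriv (fun z => P z * Q z ^ 3) y * Q y)) :=
    intC.const_mul 20
  have i12 : Integrable (fun y => -(Y₀ y * (Q y / 2 + y * deriv Q y))
      + 20 * (deriv (fun z => Q z ^ 3 * Y₀ z * P z) y * Q y)) := i1.add i2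
  have intg : Integrable (fun y => -(Y₀ y * (Q y / 2 + y * deriv Q y))
      + 20 * (deriv (fun z => Q z ^ 3 * Y₀ z * P z) y * Q y)
      + 20 * (deriv (fun z => P z * Q z ^ 3) y * Q y)) := i12.add i3
  -- bound on W and limits
  set KW : ℝ := CY * DP2 + CY' * DP + 20 * CQ ^ 4 * (CY * Cp) + 15 * (CQ ^ 4 * Cp) with hKWdef
  have hQ4e : ∀ y, |Q y ^ 4| ≤ CQ ^ 4 * E y := by
    intro y
    rw [abs_pow]
    calc |Q y| ^ 4 ≤ (CQ * E y) ^ 4 := pow_le_pow_left₀ (abs_nonneg _) (hQb y) 4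
      _ = CQ ^ 4 * E y ^ 4 := by ring
      _ ≤ CQ ^ 4 * E y := by
        refine mul_le_mul_of_nonneg_left ?_ (by positivity)
        exact pow_le_of_le_one (hE0 y).le (hE1 y) (by norm_num)
  have bW : ∀ y, |Y₀ y * deriv (deriv P) y - deriv Y₀ y * deriv P y
      + 20 * Q y ^ 4 * (Y₀ y * P y) + 15 * (Q y ^ 4 * P y)| ≤ KW * E y := by
    intro y
    have t1 : |Y₀ y * deriv (deriv P) y| ≤ CY * DP2 * E y := mul_bound_exp (hYb y) (hP''c y)
    have t2 : |deriv Y₀ y * deriv P y| ≤ CY' * DP * E y := mul_bound_exp (hY'b y) (hP'c y)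
    have t3 : |20 * Q y ^ 4 * (Y₀ y * P y)| ≤ 20 * CQ ^ 4 * (CY * Cp) * E y := by
      have h20 : |(20:ℝ)| ≤ 20 := by norm_num
      have hb : |20 * Q y ^ 4| ≤ 20 * CQ ^ 4 := abs_mul_le' h20 (hQ4c y)
      have ha : |Y₀ y * P y| ≤ CY * Cp * E y := mul_bound_exp (hYb y) (hPc y)
      exact mul_bound_exp' hb ha
    have t4 : |15 * (Q y ^ 4 * P y)| ≤ 15 * (CQ ^ 4 * Cp) * E y := by
      have h15 : |(15:ℝ)| ≤ 15 := by norm_num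
      have ha : |Q y ^ 4 * P y| ≤ CQ ^ 4 * Cp * E y := mul_bound_exp (hQ4e y) (hPc y)
      exact mul_bound_exp' h15 ha
    have s1 : |Y₀ y * deriv (deriv P) y - deriv Y₀ y * deriv P y|
        ≤ |Y₀ y * deriv (deriv P) y| + |deriv Y₀ y * deriv P y| := abs_sub _ _
    have s2 : |Y₀ y * deriv (deriv P) y - deriv Y₀ y * deriv P y + 20 * Q y ^ 4 * (Y₀ y * P y)|
        ≤ |Y₀ y * deriv (deriv P) y - deriv Y₀ y * deriv P y|
          + |20 * Q y ^ 4 * (Y₀ y * P y)| := abs_add_le _ _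
    have s3 : |Y₀ y * deriv (deriv P) y - deriv Y₀ y * deriv P y + 20 * Q y ^ 4 * (Y₀ y * P y)
          + 15 * (Q y ^ 4 * P y)|
        ≤ |Y₀ y * deriv (deriv P) y - deriv Y₀ y * deriv P y + 20 * Q y ^ 4 * (Y₀ y * P y)|
          + |15 * (Q y ^ 4 * P y)| := abs_add_le _ _
    rw [hKWdef]
    nlinarith [t1, t2, t3, t4, s1, s2, s3]
  have hEtop : Filter.Tendsto (fun y : ℝ => KW * E y) Filter.atTop (nhds 0) := by
    have h1 : Filter.Tendsto (fun y : ℝ => -|y|) Filter.atTop Filter.atBot :=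
      Filter.tendsto_neg_atTop_atBot.comp Filter.tendsto_abs_atTop_atTop
    have h2 : Filter.Tendsto E Filter.atTop (nhds 0) := Real.tendsto_exp_atBot.comp h1
    simpa using h2.const_mul KW
  have hEbot : Filter.Tendsto (fun y : ℝ => KW * E y) Filter.atBot (nhds 0) := by
    have h1 : Filter.Tendsto (fun y : ℝ => -|y|) Filter.atBot Filter.atBot :=
      Filter.tendsto_neg_atTop_atBot.comp Filter.tendsto_abs_atBot_atTop
    have h2 : Filter.Tendsto E Filter.atBot (nhds 0) := Real.tendsto_exp_atBot.comp h1
    simpa using h2.const_mul KW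
  have hWtop : Filter.Tendsto
      (fun y => Y₀ y * deriv (deriv P) y - deriv Y₀ y * deriv P y
        + 20 * Q y ^ 4 * (Y₀ y * P y) + 15 * (Q y ^ 4 * P y)) Filter.atTop (nhds 0) :=
    squeeze_zero_norm (fun y => by rw [Real.norm_eq_abs]; exact bW y) hEtop
  have hWbot : Filter.Tendsto
      (fun y => Y₀ y * deriv (deriv P) y - deriv Y₀ y * deriv P y
        + 20 * Q y ^ 4 * (Y₀ y * P y) + 15 * (Q y ^ 4 * P y)) Filter.atBot (nhds 0) :=
    squeeze_zero_norm (fun y => by rw [Real.norm_eq_abs]; exact bW y) hEbot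
  -- fundamental theorem of calculus on ℝ
  have key := integral_of_hasDerivAt_of_tendsto hW intg hWbot hWtop
  rw [integral_add i12 i3, integral_add i1 i2, integral_neg, integral_const_mul,
    integral_const_mul] at key
  rw [sub_zero] at key
  linarith [key]
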